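/- arXiv:2411.08426 — 2 statements merged into one kernel-verified Lean document; each statement's English description precedes it below -/
import Mathlib

section
/- For all m ≥ 0, the ordinary generating function of |Genmat01_m[n]| is Σ_{n≥0} |Genmat01_m[n]| x^n = 1 / (2 - (1+x)^m), as an identity of formal power series; equivalently, (2 - (1+x)^m) · Σ_{n≥0} |Genmat01_m[n]| x^n = 1. -/
open Finset

noncomputable def Genmat01Card (m n : ℕ) : ℕ :=
  Set.ncard {p : Σ k : ℕ, Matrix (Fin m) (Fin k) ℕ |
    (∑ i, ∑ j, p.2 i j) = n ∧ (∀ i j, p.2 i j ≤ 1) ∧ ∀ j, ∃ i, 0 < p.2 i j}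

open PowerSeries

/-!
Reading off the supports of its columns identifies a 0/1 matrix with no zero column with a list of
nonempty subsets of the rows, the entry sum becoming the total size. Splitting off the head of such
a list shows that the generating series `S` of these lists satisfies `S = 1 + P * S`, where
`P = ∑_{∅ ≠ s ⊆ [m]} x ^ |s| = (1 + x) ^ m - 1`.
-/

section WeightedLists

variable {α : Type*} (w : α → ℕ)

abbrev ListsOfWeight (n : ℕ) : Type _ := {l : List α // (l.map w).sum = n}

def listsOfWeightEquivNilSumCons (n : ℕ) :
    ListsOfWeight w n ≃ {_u : Unit // n = 0} ⊕ Σ a, {l : List α // w a + (l.map w).sum = n} where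
  toFun
    | ⟨[], h⟩ => .inl ⟨(), by simpa [eq_comm] using h⟩
    | ⟨a :: l, h⟩ => .inr ⟨a, l, by simpa using h⟩
  invFun
    | .inl ⟨_, h⟩ => ⟨[], by simp [h]⟩
    | .inr ⟨a, l, h⟩ => ⟨a :: l, by simpa using h⟩
  left_inv := by rintro ⟨_ | ⟨a, l⟩, h⟩ <;> rfl
  right_inv := by rintro (⟨_, h⟩ | ⟨a, l, h⟩) <;> rfl

variable {w}

theorem List.finite_setOf_sum_map_le [Finite α] (hw : ∀ a, 0 < w a) (n : ℕ) :
    {l : List α | (l.map w).sum ≤ n}.Finite := by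
  refine (List.finite_length_le α n).subset fun l (hl : _ ≤ n) => ?_
  have := List.length_le_sum_of_one_le (l.map w) <| by
    simp only [List.mem_map]
    rintro _ ⟨a, -, rfl⟩
    exact hw a
  simp only [List.length_map] at this
  exact this.trans hl

theorem natCard_add_sum_map_eq (a : α) (n : ℕ) :
    Nat.card {l : List α // w a + (l.map w).sum = n} =
      if w a ≤ n then Nat.card (ListsOfWeight w (n - w a)) else 0 := by
  split_ifs with h
  · exact Nat.card_congr (Equiv.subtypeEquivRight fun l => by omega)
  · have : IsEmpty {l : List α // w a + (l.map w).sum = n} := ⟨fun l => by omega⟩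
    exact Nat.card_of_isEmpty

theorem mk_natCard_listsOfWeight_eq {R : Type*} [Semiring R] [Fintype α] (hw : ∀ a, 0 < w a) :
    PowerSeries.mk (fun n => (Nat.card (ListsOfWeight w n) : R)) =
      1 + (∑ a, X ^ w a) * PowerSeries.mk (fun n => (Nat.card (ListsOfWeight w n) : R)) := by
  ext n
  have hfin := List.finite_setOf_sum_map_le hw n
  have (a : α) : Finite {l : List α // w a + (l.map w).sum = n} :=
    (hfin.subset fun l (hl : _ = n) => by change _ ≤ n; omega).to_subtype
  rw [coeff_mk, Nat.card_congr (listsOfWeightEquivNilSumCons w n), Nat.card_sum, Nat.card_sigma]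
  simp only [natCard_add_sum_map_eq, Finset.sum_mul, map_add, map_sum, coeff_X_pow_mul',
    coeff_mk, coeff_one, Nat.cast_add, Nat.cast_sum, Nat.cast_ite, Nat.cast_zero]
  congr 1
  by_cases hn : n = 0 <;> simp [hn]

end WeightedLists

theorem sum_pow_card_nonempty {ι R : Type*} [Fintype ι] [CommRing R] (x : R) :
    ∑ s : {s : Finset ι // s.Nonempty}, x ^ #s.1 = (1 + x) ^ Fintype.card ι - 1 := by
  classical
  have hall : ∑ s : Finset ι, x ^ #s = (1 + x) ^ Fintype.card ι := by
    simpa [add_comm] using Fintype.sum_pow_mul_eq_add_pow ι x 1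
  rw [← sum_subtype (univ.erase ∅) (by simp [nonempty_iff_ne_empty]) (x ^ #·),
    sum_erase_eq_sub (mem_univ _), hall, card_empty, pow_zero]

section ZeroOneMatrices

variable {ι : Type*} [Fintype ι] [DecidableEq ι]

def zeroOneVectorEquiv :
    {v : ι → ℕ // (∀ i, v i ≤ 1) ∧ ∃ i, 0 < v i} ≃ {s : Finset ι // s.Nonempty} where
  toFun v := ⟨univ.filter (0 < v.1 ·), let ⟨i, hi⟩ := v.2.2; ⟨i, by simpa using hi⟩⟩
  invFun s := ⟨fun i => if i ∈ s.1 then 1 else 0, fun i => by by_cases i ∈ s.1 <;> simp [*],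
    let ⟨i, hi⟩ := s.2; ⟨i, by simp [hi]⟩⟩
  left_inv v := Subtype.ext <| funext fun i => by
    have := v.2.1 i
    simp only [mem_filter, mem_univ, true_and]
    split_ifs <;> omega
  right_inv s := Subtype.ext <| by ext i; by_cases i ∈ s.1 <;> simp [*]

theorem card_zeroOneVectorEquiv (v : {v : ι → ℕ // (∀ i, v i ≤ 1) ∧ ∃ i, 0 < v i}) :
    #(zeroOneVectorEquiv v).1 = ∑ i, v.1 i := by
  rw [zeroOneVectorEquiv, Equiv.coe_fn_mk, card_filter]
  refine sum_congr rfl fun i _ => ?_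
  have := v.2.1 i
  split_ifs <;> omega

def zeroOneMatrixEquiv (κ : Type*) :
    {M : Matrix ι κ ℕ // (∀ i j, M i j ≤ 1) ∧ ∀ j, ∃ i, 0 < M i j} ≃
      (κ → {s : Finset ι // s.Nonempty}) where
  toFun M j := zeroOneVectorEquiv ⟨fun i => M.1 i j, fun i => M.2.1 i j, M.2.2 j⟩
  invFun t := ⟨fun i j => (zeroOneVectorEquiv.symm (t j)).1 i,
    fun i j => (zeroOneVectorEquiv.symm (t j)).2.1 i, fun j => (zeroOneVectorEquiv.symm (t j)).2.2⟩
  left_inv M := by ext i j; simp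
  right_inv t := by funext j; simp

end ZeroOneMatrices

def Equiv.subtypeSigmaEquivSigmaSubtype {α : Type*} {β : α → Type*} (p : ∀ a, β a → Prop) :
    {x : Σ a, β a // p x.1 x.2} ≃ Σ a, {b // p a b} :=
  ⟨fun x => ⟨x.1.1, x.1.2, x.2⟩, fun x => ⟨⟨x.1, x.2.1⟩, x.2.2⟩, fun _ => rfl, fun _ => rfl⟩

def zeroOneMatrixListEquiv (m : ℕ) :
    {p : Σ k, Matrix (Fin m) (Fin k) ℕ // (∀ i j, p.2 i j ≤ 1) ∧ ∀ j, ∃ i, 0 < p.2 i j} ≃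
      List {s : Finset (Fin m) // s.Nonempty} :=
  (Equiv.subtypeSigmaEquivSigmaSubtype _).trans <|
    (Equiv.sigmaCongrRight fun _ => zeroOneMatrixEquiv _).trans List.equivSigmaTuple.symm

theorem sum_map_card_zeroOneMatrixListEquiv (m : ℕ)
    (p : {p : Σ k, Matrix (Fin m) (Fin k) ℕ // (∀ i j, p.2 i j ≤ 1) ∧ ∀ j, ∃ i, 0 < p.2 i j}) :
    ((zeroOneMatrixListEquiv m p).map (#·.1)).sum = ∑ i, ∑ j, p.1.2 i j := by
  simp only [zeroOneMatrixListEquiv, Equiv.subtypeSigmaEquivSigmaSubtype, zeroOneMatrixEquiv,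
    Equiv.trans_apply, Equiv.coe_fn_mk, Equiv.sigmaCongrRight_apply,
    List.equivSigmaTuple_symm_apply, List.map_ofFn, List.sum_ofFn, Function.comp_apply, card_zeroOneVectorEquiv]
  exact sum_comm

theorem genmat01Card_eq (m n : ℕ) :
    Genmat01Card m n =
      Nat.card (ListsOfWeight (fun s : {s : Finset (Fin m) // s.Nonempty} => #s.1) n) := by
  rw [Genmat01Card, ← Nat.card_coe_set_eq]
  exact Nat.card_congr <| (Equiv.subtypeEquivRight fun _ => and_comm).trans <|
    (Equiv.subtypeSubtypeEquivSubtypeInter _ _).symm.trans <|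
      (zeroOneMatrixListEquiv m).subtypeEquiv fun p => by rw [sum_map_card_zeroOneMatrixListEquiv]

theorem genmat01_ogf (m : ℕ) :
    (2 - (1 + PowerSeries.X) ^ m) *
        PowerSeries.mk (fun n => (Genmat01Card m n : ℚ)) = 1 := by
  have hrec := mk_natCard_listsOfWeight_eq (R := ℚ)
    (w := fun s : {s : Finset (Fin m) // s.Nonempty} => #s.1) fun s => s.2.card_pos
  rw [sum_pow_card_nonempty, Fintype.card_fin] at hrec
  simp only [genmat01Card_eq]
  linear_combination hrec
end

section
/- For all n ≥ 0, the weak two-sided Caylerian polynomial satisfies n! · B̂_n(s,t) = Σ_{k=0}^{n} c(n,k) · Bal^s(k) · Bal^t(k), as an identity of polynomials in s and t, where Bal^t(k) = Σ_{w ∈ Bal[k]} t^{blocks(w)} records the distribution of the number of blocks over ballots of [k]. -/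
open Finset

noncomputable def stirling1 (n k : ℕ) : ℕ :=
  Set.ncard {σ : Equiv.Perm (Fin n) |
    (n - σ.support.card) + Multiset.card σ.cycleType = k}


noncomputable def BalPoly (k : ℕ) (t : ℚ) : ℚ :=
  ∑ᶠ L ∈ {L : List (Finset (Fin k)) |
      (∀ B ∈ L, B.Nonempty) ∧ L.Pairwise Disjoint ∧ ∀ x, ∃ B ∈ L, x ∈ B},
    t ^ L.length

noncomputable def BhatPoly (n : ℕ) (s t : ℚ) : ℚ :=
  ∑ᶠ p ∈ {p : Σ r : ℕ, Σ k : ℕ, Matrix (Fin r) (Fin k) ℕ |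
      (∑ i, ∑ j, p.2.2 i j) = n ∧ (∀ i, ∃ j, 0 < p.2.2 i j) ∧ ∀ j, ∃ i, 0 < p.2.2 i j},
    s ^ p.1 * t ^ p.2.1

/-!
Let `Perm (Fin n)` act by precomposition on the maps `C : Fin n → Fin r × Fin c` whose two
coordinates are surjective. An orbit is determined by the matrix of fiber sizes of `C`, and the
matrices that occur are exactly the Burge matrices with `r` rows, `c` columns and entry sum `n`.
Burnside's lemma therefore gives `n! · #Burge(r, c) = ∑ σ, #Fix(σ)`. A map fixed by `σ` is
constant on the cycles of `σ`, so it is a pair of surjections from the cycles onto `Fin r` and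
`Fin c`; and a surjection `Fin k → Fin r` is the same thing as a ballot of `[k]` with `r` blocks
(its fibers, in order). Grouping permutations by their number of cycles produces `c(n, k)`.
-/

open Function Equiv MulAction

noncomputable def numSurj (k r : ℕ) : ℕ := Nat.card {f : Fin k → Fin r // Surjective f}

theorem natCard_surjective_eq_numSurj {α : Type*} [Finite α] (r : ℕ) :
    Nat.card {f : α → Fin r // Surjective f} = numSurj (Nat.card α) r :=
  Nat.card_congr <| (Equiv.arrowCongr (Finite.equivFin α) (Equiv.refl _)).subtypeEquiv
    fun f => (Finite.equivFin α).symm.surjective.of_comp_iff f |>.symm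

section Ballot

variable {k r : ℕ}

def IsBallot (L : List (Finset (Fin k))) : Prop :=
  (∀ B ∈ L, B.Nonempty) ∧ L.Pairwise Disjoint ∧ ∀ x, ∃ B ∈ L, x ∈ B

def ballotOfFun (f : Fin k → Fin r) : List (Finset (Fin k)) :=
  List.ofFn fun i => univ.filter fun x => f x = i

@[simp]
theorem length_ballotOfFun (f : Fin k → Fin r) : (ballotOfFun f).length = r :=
  List.length_ofFn

theorem mem_ballotOfFun_getElem {f : Fin k → Fin r} {i : ℕ} (hi : i < (ballotOfFun f).length)
    {x : Fin k} : x ∈ (ballotOfFun f)[i] ↔ (f x : ℕ) = i := by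
  simp [ballotOfFun, Fin.ext_iff]

theorem IsBallot.index_unique {L : List (Finset (Fin k))} (hL : IsBallot L) {i j : ℕ}
    (hi : i < L.length) (hj : j < L.length) {x : Fin k} (hxi : x ∈ L[i]) (hxj : x ∈ L[j]) :
    i = j := by
  have hdisj := List.pairwise_iff_getElem.1 hL.2.1
  by_contra hij
  rcases Nat.lt_or_gt_of_ne hij with h | h
  · exact Finset.disjoint_left.1 (hdisj i j hi hj h) hxi hxj
  · exact Finset.disjoint_left.1 (hdisj j i hj hi h) hxj hxi

theorem isBallot_ballotOfFun {f : Fin k → Fin r} (hf : Surjective f) :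
    IsBallot (ballotOfFun f) := by
  refine ⟨?_, ?_, fun x => ⟨_, List.getElem_mem (by simp : (f x : ℕ) < _), ?_⟩⟩
  · simp only [ballotOfFun, List.mem_ofFn, forall_exists_index]
    rintro _ i rfl
    obtain ⟨x, rfl⟩ := hf i
    exact ⟨x, by simp⟩
  · refine List.pairwise_iff_getElem.2 fun i j hi hj hij =>
      Finset.disjoint_left.2 fun x hxi hxj => ?_
    rw [mem_ballotOfFun_getElem] at hxi hxj
    omega
  · rw [mem_ballotOfFun_getElem]

theorem ballotOfFun_injective : Injective (ballotOfFun : (Fin k → Fin r) → _) := by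
  intro f g hfg
  funext x
  have hx : x ∈ (ballotOfFun f)[(f x : ℕ)]'(by simp) := (mem_ballotOfFun_getElem _).2 rfl
  simp only [hfg, mem_ballotOfFun_getElem] at hx
  exact Fin.ext hx.symm

theorem IsBallot.exists_ballotOfFun {L : List (Finset (Fin k))} (hL : IsBallot L) :
    ∃ f : Fin k → Fin L.length, Surjective f ∧ ballotOfFun f = L := by
  have hcover (x : Fin k) : ∃ i : Fin L.length, x ∈ L[i] := by
    obtain ⟨B, hB, hx⟩ := hL.2.2 x
    obtain ⟨i, hi, rfl⟩ := List.mem_iff_getElem.1 hB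
    exact ⟨⟨i, hi⟩, hx⟩
  choose f hf using hcover
  have hf_iff {x : Fin k} {i : ℕ} (hi : i < L.length) : x ∈ L[i] ↔ (f x : ℕ) = i :=
    ⟨fun hx => hL.index_unique (f x).2 hi (hf x) hx, fun h => by simpa [← h] using hf x⟩
  refine ⟨f, fun i => ?_, List.ext_getElem (by simp) fun i h₁ h₂ => ?_⟩
  · obtain ⟨x, hx⟩ := hL.1 _ (List.getElem_mem i.2)
    exact ⟨x, Fin.ext ((hf_iff i.2).1 hx)⟩
  · ext x
    rw [mem_ballotOfFun_getElem, hf_iff]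

theorem balPoly_eq_sum {N : ℕ} (hk : k ≤ N) (t : ℚ) :
    BalPoly k t = ∑ r ∈ range (N + 1), (numSurj k r : ℚ) * t ^ r := by
  classical
  let g : (Σ r : Fin (N + 1), {f : Fin k → Fin r // Surjective f}) → List (Finset (Fin k)) :=
    fun p => ballotOfFun p.2.1
  have hg : Injective g := by
    rintro ⟨r, f, hf⟩ ⟨r', f', hf'⟩ h
    obtain rfl : r = r' := Fin.ext (by simpa [g] using congrArg List.length h)
    obtain rfl : f = f' := ballotOfFun_injective h
    rfl
  have hrange : Set.range g = {L | IsBallot L} := by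
    ext L
    refine ⟨?_, fun hL => ?_⟩
    · rintro ⟨⟨r, f, hf⟩, rfl⟩
      exact isBallot_ballotOfFun hf
    · obtain ⟨f, hf, hfL⟩ := IsBallot.exists_ballotOfFun hL
      have hr : L.length ≤ k := by simpa using Fintype.card_le_of_surjective f hf
      exact ⟨⟨⟨L.length, by omega⟩, f, hf⟩, hfL⟩
  calc BalPoly k t = ∑ᶠ L ∈ Set.range g, t ^ L.length := by rw [hrange]; rfl
    _ = ∑ r : Fin (N + 1), (numSurj k r : ℚ) * t ^ (r : ℕ) := by
      rw [finsum_mem_range hg, finsum_eq_sum_of_fintype, Fintype.sum_sigma]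
      simp [g, numSurj, Nat.card_eq_fintype_card]
    _ = _ := Fin.sum_univ_eq_sum_range (fun r => (numSurj k r : ℚ) * t ^ r) (N + 1)

end Ballot

attribute [local instance] arrowAction

section Orbits

variable {α ι : Type*}

theorem perm_smul_apply {β : Type*} (σ : Perm α) (C : α → β) (a : α) :
    (σ • C) a = C (σ⁻¹ a) := rfl

theorem natCard_fiber_perm_smul (σ : Perm α) (C : α → ι) (i : ι) :
    Nat.card {a // (σ • C) a = i} = Nat.card {a // C a = i} :=
  Nat.card_congr (σ⁻¹.subtypeEquiv fun _ => Iff.rfl)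

theorem exists_perm_smul_eq_of_natCard_fiber_eq [Finite α] {C C' : α → ι}
    (h : ∀ i, Nat.card {a // C a = i} = Nat.card {a // C' a = i}) :
    ∃ σ : Perm α, σ • C = C' := by
  let σ : Perm α := Equiv.ofFiberEquiv fun i => (Finite.card_eq.1 (h i)).some
  refine ⟨σ, funext fun a => ?_⟩
  calc (σ • C) a = C' (σ (σ⁻¹ a)) := (Equiv.ofFiberEquiv_map _ (σ⁻¹ a)).symm
    _ = C' a := by simp

theorem sum_natCard_fiber [Fintype ι] [Finite α] (C : α → ι) :
    ∑ i, Nat.card {a // C a = i} = Nat.card α := by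
  rw [← Nat.card_sigma, Nat.card_congr (Equiv.sigmaFiberEquiv C)]

theorem exists_natCard_fiber_eq [Fintype ι] [Finite α] {m : ι → ℕ}
    (hm : ∑ i, m i = Nat.card α) : ∃ C : α → ι, ∀ i, Nat.card {a // C a = i} = m i := by
  have : Nat.card (Σ i, Fin (m i)) = Nat.card α := by simp [hm]
  let e := (Finite.card_eq.1 this).some
  exact ⟨fun a => (e.symm a).1, fun i => by
    simpa using
      Nat.card_congr ((e.symm.subtypeEquiv fun _ => Iff.rfl).trans (Equiv.sigmaSubtype i))⟩

variable (α) in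
def bisurjections (r c : ℕ) : SubMulAction (Perm α) (α → Fin r × Fin c) where
  carrier := {C | Surjective (Prod.fst ∘ C) ∧ Surjective (Prod.snd ∘ C)}
  smul_mem' σ _ hC := ⟨hC.1.comp σ⁻¹.surjective, hC.2.comp σ⁻¹.surjective⟩

theorem mem_bisurjections {r c : ℕ} {C : α → Fin r × Fin c} :
    C ∈ bisurjections α r c ↔ Surjective (Prod.fst ∘ C) ∧ Surjective (Prod.snd ∘ C) :=
  Iff.rfl

noncomputable def fiberMatrix {r c : ℕ} (C : α → Fin r × Fin c) :
    Matrix (Fin r) (Fin c) ℕ :=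
  Matrix.of fun i j => Nat.card {a // C a = (i, j)}

def IsBurge (n : ℕ) {r c : ℕ} (A : Matrix (Fin r) (Fin c) ℕ) : Prop :=
  (∑ i, ∑ j, A i j) = n ∧ (∀ i, ∃ j, 0 < A i j) ∧ ∀ j, ∃ i, 0 < A i j

variable [Finite α] {r c : ℕ}

theorem fiberMatrix_eq_iff {C C' : α → Fin r × Fin c} :
    fiberMatrix C = fiberMatrix C' ↔ ∃ σ : Perm α, σ • C = C' := by
  refine ⟨fun h => exists_perm_smul_eq_of_natCard_fiber_eq fun p => ?_, ?_⟩
  · simpa [fiberMatrix] using congrFun₂ h p.1 p.2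
  · rintro ⟨σ, rfl⟩
    ext i j
    exact (natCard_fiber_perm_smul σ C (i, j)).symm

theorem isBurge_fiberMatrix_iff {C : α → Fin r × Fin c} :
    IsBurge (Nat.card α) (fiberMatrix C) ↔ C ∈ bisurjections α r c := by
  have hsum : ∑ i, ∑ j, fiberMatrix C i j = Nat.card α := by
    simpa [fiberMatrix, Fintype.sum_prod_type] using sum_natCard_fiber C
  simp only [IsBurge, hsum, true_and]
  simp [mem_bisurjections, fiberMatrix, Finite.card_pos_iff, Surjective, Prod.ext_iff]

theorem exists_fiberMatrix_eq {A : Matrix (Fin r) (Fin c) ℕ}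
    (hA : ∑ i, ∑ j, A i j = Nat.card α) :
    ∃ C : α → Fin r × Fin c, fiberMatrix C = A := by
  obtain ⟨C, hC⟩ := exists_natCard_fiber_eq (m := fun p : Fin r × Fin c => A p.1 p.2)
    (by rwa [Fintype.sum_prod_type])
  exact ⟨C, Matrix.ext fun i j => hC (i, j)⟩

variable (α r c) in
noncomputable def orbitsEquivBurge :
    orbitRel.Quotient (Perm α) (bisurjections α r c) ≃
      {A : Matrix (Fin r) (Fin c) ℕ // IsBurge (Nat.card α) A} :=
  Equiv.ofBijective
    (Quotient.lift (fun C => ⟨fiberMatrix C.1, isBurge_fiberMatrix_iff.2 C.2⟩) fun C C' h => by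
      obtain ⟨σ, hσ⟩ := mem_orbit_iff.1 (orbitRel_apply.1 h)
      simpa using (fiberMatrix_eq_iff.2 ⟨σ, congrArg Subtype.val hσ⟩).symm)
    ⟨by
      rintro ⟨C⟩ ⟨C'⟩ h
      obtain ⟨σ, hσ⟩ := fiberMatrix_eq_iff.1 (congrArg Subtype.val h).symm
      exact Quotient.sound (orbitRel_apply.2 (mem_orbit_iff.2 ⟨σ, Subtype.ext hσ⟩)),
    fun A => by
      obtain ⟨C, hC⟩ := exists_fiberMatrix_eq A.2.1
      exact ⟨⟦⟨C, isBurge_fiberMatrix_iff.1 (hC ▸ A.2)⟩⟧, Subtype.ext hC⟩⟩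

end Orbits

namespace Equiv.Perm

variable {α : Type*}

-- Fixed points count as cycles.
noncomputable def numCycles (σ : Perm α) : ℕ := Nat.card (Quotient (SameCycle.setoid σ))

theorem numCycles_le_card [Finite α] (σ : Perm α) : σ.numCycles ≤ Nat.card α :=
  Nat.card_le_card_of_surjective _ Quotient.mk_surjective

section Label

variable [Fintype α] [DecidableEq α]

def cycleLabel (σ : Perm α) (x : α) : {x // x ∉ σ.support} ⊕ σ.cycleFactorsFinset :=
  if hx : x ∈ σ.support then .inr ⟨σ.cycleOf x, cycleOf_mem_cycleFactorsFinset_iff.2 hx⟩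
  else .inl ⟨x, hx⟩

theorem cycleLabel_eq_iff {σ : Perm α} {x y : α} :
    cycleLabel σ x = cycleLabel σ y ↔ σ.SameCycle x y := by
  by_cases hx : x ∈ σ.support <;> by_cases hy : y ∈ σ.support
  · simp [cycleLabel, hx, hy, sameCycle_iff_cycleOf_eq_of_mem_support hx hy]
  · simpa [cycleLabel, hx, hy] using fun h : σ.SameCycle x y => hy (h.mem_support_iff.1 hx)
  · simpa [cycleLabel, hx, hy] using fun h : σ.SameCycle x y => hx (h.mem_support_iff.2 hy)
  · simp only [cycleLabel, hx, hy, dite_false, Sum.inl.injEq, Subtype.mk.injEq]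
    exact ⟨fun h => h ▸ SameCycle.rfl, fun h => h.eq_of_left (notMem_support.1 hx)⟩

theorem numCycles_eq (σ : Perm α) :
    σ.numCycles = (Fintype.card α - #σ.support) + Multiset.card σ.cycleType := by
  let e : Quotient (SameCycle.setoid σ) ≃ {x // x ∉ σ.support} ⊕ σ.cycleFactorsFinset :=
    Equiv.ofBijective (Quotient.lift (cycleLabel σ) fun _ _ => cycleLabel_eq_iff.2) <| by
      refine ⟨fun p q => Quotient.inductionOn₂ p q fun x y h =>
        Quotient.sound (cycleLabel_eq_iff.1 h), ?_⟩
      rintro (⟨x, hx⟩ | ⟨c, hc⟩)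
      · exact ⟨⟦x⟧, by simp [cycleLabel, hx]⟩
      · obtain ⟨x, hx⟩ := (mem_cycleFactorsFinset_iff.1 hc).1.nonempty_support
        have hxσ := mem_cycleFactorsFinset_support_le hc hx
        exact ⟨⟦x⟧, by simp [cycleLabel, hxσ, ← cycle_is_cycleOf hx hc]⟩
  rw [numCycles, Nat.card_congr e, Nat.card_sum, cycleType_def, Multiset.card_map,
    Nat.card_eq_fintype_card, Fintype.card_subtype_compl, Fintype.card_coe,
    Nat.card_eq_finsetCard]
  rfl

end Label

theorem apply_eq_of_smul_eq_self_of_sameCycle {β : Type*} {σ : Perm α} {C : α → β}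
    (hC : σ • C = C) {x y : α} (h : σ.SameCycle x y) : C x = C y := by
  obtain ⟨i, rfl⟩ := h
  have hi : (σ ^ i) • C = C := mem_stabilizer_iff.1 (zpow_mem (mem_stabilizer_iff.2 hC) i)
  simpa [perm_smul_apply] using congrFun hi ((σ ^ i) x)

theorem smul_comp_mk_eq_self {β : Type*} (σ : Perm α)
    (F : Quotient (SameCycle.setoid σ) → β) :
    σ • (F ∘ Quotient.mk _) = F ∘ Quotient.mk _ :=
  funext fun a => congrArg F (Quotient.sound (sameCycle_symm_apply_left.2 (SameCycle.refl σ a)))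

end Equiv.Perm

open Equiv.Perm

section FixedPoints

variable {α : Type*} (σ : Perm α) (r c : ℕ)

noncomputable def fixedByBisurjectionsEquiv :
    fixedBy (bisurjections α r c) σ ≃
      {f : Quotient (SameCycle.setoid σ) → Fin r // Surjective f} ×
        {g : Quotient (SameCycle.setoid σ) → Fin c // Surjective g} where
  toFun C :=
    have hC : σ • C.1.1 = C.1.1 := congrArg Subtype.val (mem_fixedBy.1 C.2)
    (⟨Quotient.lift (Prod.fst ∘ C.1.1) fun _ _ h =>
        congrArg Prod.fst (apply_eq_of_smul_eq_self_of_sameCycle hC h),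
      Surjective.of_comp (g := Quotient.mk _) C.1.2.1⟩,
     ⟨Quotient.lift (Prod.snd ∘ C.1.1) fun _ _ h =>
        congrArg Prod.snd (apply_eq_of_smul_eq_self_of_sameCycle hC h),
      Surjective.of_comp (g := Quotient.mk _) C.1.2.2⟩)
  invFun fg :=
    ⟨⟨fun a => (fg.1.1 ⟦a⟧, fg.2.1 ⟦a⟧),
      fg.1.2.comp Quotient.mk_surjective, fg.2.2.comp Quotient.mk_surjective⟩,
     mem_fixedBy.2 (Subtype.ext (smul_comp_mk_eq_self σ fun q => (fg.1.1 q, fg.2.1 q)))⟩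
  left_inv _ := rfl
  right_inv fg := by
    ext q <;> induction q using Quotient.inductionOn <;> rfl

theorem natCard_fixedBy_bisurjections [Finite α] :
    Nat.card (fixedBy (bisurjections α r c) σ) =
      numSurj σ.numCycles r * numSurj σ.numCycles c := by
  rw [Nat.card_congr (fixedByBisurjectionsEquiv σ r c), Nat.card_prod,
    natCard_surjective_eq_numSurj, natCard_surjective_eq_numSurj, numCycles]

end FixedPoints

theorem natCard_isBurge_mul_factorial {α : Type*} [Fintype α] [DecidableEq α] (r c : ℕ) :
    Nat.card {A : Matrix (Fin r) (Fin c) ℕ // IsBurge (Nat.card α) A} * (Nat.card α).factorial =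
      ∑ σ : Perm α, numSurj σ.numCycles r * numSurj σ.numCycles c := by
  classical
  have := sum_card_fixedBy_eq_card_orbits_mul_card_group (Perm α) (bisurjections α r c)
  simp only [← Nat.card_eq_fintype_card, Nat.card_perm, natCard_fixedBy_bisurjections] at this
  rw [← Nat.card_congr (orbitsEquivBurge α r c), this]

section Burge

variable {n r c : ℕ}

instance : Finite {A : Matrix (Fin r) (Fin c) ℕ // IsBurge n A} := by
  simpa using Finite.of_equiv _ (orbitsEquivBurge (Fin n) r c)

theorem IsBurge.dims_le {A : Matrix (Fin r) (Fin c) ℕ} (hA : IsBurge n A) :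
    r ≤ n ∧ c ≤ n := by
  obtain ⟨C, hC⟩ := exists_fiberMatrix_eq (α := Fin n) (A := A) (by simpa using hA.1)
  have hCb : C ∈ bisurjections (Fin n) r c := by
    rw [← isBurge_fiberMatrix_iff, hC]
    simpa using hA
  simpa using And.intro (Fintype.card_le_of_surjective _ hCb.1)
    (Fintype.card_le_of_surjective _ hCb.2)

variable (n) in
theorem bhatPoly_eq_sum (s t : ℚ) :
    BhatPoly n s t = ∑ r ∈ range (n + 1), ∑ c ∈ range (n + 1),
      (Nat.card {A : Matrix (Fin r) (Fin c) ℕ // IsBurge n A} : ℚ) * (s ^ r * t ^ c) := by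
  classical
  have (r c : ℕ) := Fintype.ofFinite {A : Matrix (Fin r) (Fin c) ℕ // IsBurge n A}
  let g : (Σ r c : Fin (n + 1), {A : Matrix (Fin r) (Fin c) ℕ // IsBurge n A}) →
      Σ r k : ℕ, Matrix (Fin r) (Fin k) ℕ := fun p => ⟨p.1, p.2.1, p.2.2.1⟩
  have hg : Injective g := by
    rintro ⟨r, c, A, hA⟩ ⟨r', c', A', hA'⟩ h
    simp only [g, Sigma.mk.inj_iff] at h
    obtain ⟨hr, h⟩ := h
    obtain rfl := Fin.ext hr
    rw [heq_iff_eq, Sigma.mk.inj_iff] at h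
    obtain ⟨hc, h⟩ := h
    obtain rfl := Fin.ext hc
    obtain rfl := eq_of_heq h
    rfl
  have hrange : Set.range g = {p | IsBurge n p.2.2} := by
    refine Set.ext fun p => ⟨by rintro ⟨⟨r, c, A, hA⟩, rfl⟩; exact hA, fun hA => ?_⟩
    obtain ⟨r, c, A⟩ := p
    have ⟨hr, hc⟩ : r ≤ n ∧ c ≤ n := IsBurge.dims_le hA
    exact ⟨⟨⟨r, by omega⟩, ⟨c, by omega⟩, A, hA⟩, rfl⟩
  calc BhatPoly n s t = ∑ᶠ p ∈ Set.range g, s ^ p.1 * t ^ p.2.1 := by rw [hrange]; rfl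
    _ = ∑ r : Fin (n + 1), ∑ c : Fin (n + 1),
        (Nat.card {A : Matrix (Fin r) (Fin c) ℕ // IsBurge n A} : ℚ) *
          (s ^ (r : ℕ) * t ^ (c : ℕ)) := by
      rw [finsum_mem_range hg, finsum_eq_sum_of_fintype, Fintype.sum_sigma]
      refine sum_congr rfl fun r _ => ?_
      rw [Fintype.sum_sigma]
      refine sum_congr rfl fun c _ => ?_
      rw [Nat.card_eq_fintype_card, ← nsmul_eq_mul, ← card_univ, ← sum_const]
    _ = _ := by simp_rw [← Fin.sum_univ_eq_sum_range]

end Burge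

theorem stirling1_eq_card (n k : ℕ) :
    stirling1 n k = #{σ : Perm (Fin n) | σ.numCycles = k} := by
  rw [stirling1, ← Set.ncard_coe_finset]
  congr 1
  ext σ
  simp [numCycles_eq]

theorem sum_numCycles_eq_sum_stirling1 {M : Type*} [AddCommMonoid M] (n : ℕ) (g : ℕ → M) :
    ∑ σ : Perm (Fin n), g σ.numCycles = ∑ k ∈ range (n + 1), stirling1 n k • g k := by
  rw [← sum_fiberwise_of_maps_to (g := numCycles) (t := range (n + 1))
    fun σ _ => mem_range.2 (Nat.lt_succ_of_le (by simpa using σ.numCycles_le_card))]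
  refine sum_congr rfl fun k _ => ?_
  rw [stirling1_eq_card, ← sum_const]
  exact sum_congr rfl fun σ hσ => by rw [(mem_filter.1 hσ).2]

theorem factorial_mul_bhatPoly (n : ℕ) (s t : ℚ) :
    (n.factorial : ℚ) * BhatPoly n s t = ∑ σ : Perm (Fin n),
      (∑ r ∈ range (n + 1), (numSurj σ.numCycles r : ℚ) * s ^ r) *
        ∑ c ∈ range (n + 1), (numSurj σ.numCycles c : ℚ) * t ^ c := by
  have hburge (r c : ℕ) := natCard_isBurge_mul_factorial (α := Fin n) r c
  simp only [Nat.card_fin] at hburge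
  simp only [sum_mul_sum]
  rw [sum_comm (s := (univ : Finset (Perm (Fin n)))), bhatPoly_eq_sum, mul_sum]
  refine sum_congr rfl fun r _ => ?_
  rw [sum_comm, mul_sum]
  refine sum_congr rfl fun c _ => ?_
  rw [← mul_assoc, mul_comm (n.factorial : ℚ), ← Nat.cast_mul, hburge, Nat.cast_sum, sum_mul]
  refine sum_congr rfl fun σ _ => ?_
  push_cast
  ring

theorem two_sided_caylerian (n : ℕ) (s t : ℚ) :
    ((Nat.factorial n : ℕ) : ℚ) * BhatPoly n s t =
      ∑ k ∈ Finset.range (n + 1), (stirling1 n k : ℚ) * BalPoly k s * BalPoly k t := by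
  have hbal (σ : Perm (Fin n)) (x : ℚ) :=
    balPoly_eq_sum (by simpa using σ.numCycles_le_card : σ.numCycles ≤ n) x
  rw [factorial_mul_bhatPoly]
  simp only [← hbal]
  rw [sum_numCycles_eq_sum_stirling1 n fun k => BalPoly k s * BalPoly k t]
  simp only [nsmul_eq_mul, mul_assoc]
end
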